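/- Let G be a digraph with at least one arc and let f : V(G) × V(G) → ℝ≥0 be a function that is strictly positive on all arcs of G. Then q(G) ≤ max over arcs (v_i,v_j) ∈ E(G) of ( Σ_{v_k : (v_i,v_k)∈E(G)} f(v_i,v_k) + Σ_{v_k : (v_j,v_k)∈E(G)} f(v_j,v_k) ) / f(v_i,v_j). -/

import Mathlib

open Matrix Finset

/-- Spectral radius of a complex square matrix: the largest modulus of its eigenvalues. -/
noncomputable def specRad {n : ℕ} (M : Matrix (Fin n) (Fin n) ℂ) : ℝ :=
  sSup {x : ℝ | ∃ μ ∈ spectrum ℂ M, x = ‖μ‖}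

/-- Spectral radius of a real square matrix (via its complex eigenvalues). -/
noncomputable def specRadR {n : ℕ} (M : Matrix (Fin n) (Fin n) ℝ) : ℝ :=
  specRad (M.map Complex.ofReal)

/-- Adjacency matrix of a digraph given by its arc relation. -/
def adjM {n : ℕ} (E : Fin n → Fin n → Prop) [DecidableRel E] :
    Matrix (Fin n) (Fin n) ℝ := fun i j => if E i j then 1 else 0

/-- Outdegree of vertex `i`. -/
def outdeg {n : ℕ} (E : Fin n → Fin n → Prop) [DecidableRel E] (i : Fin n) : ℕ :=
  (Finset.univ.filter (fun j => E i j)).card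

/-- Signless Laplacian `Q(G) = D(G) + A(G)`. -/
noncomputable def Qmat {n : ℕ} (E : Fin n → Fin n → Prop) [DecidableRel E] :
    Matrix (Fin n) (Fin n) ℝ :=
  Matrix.diagonal (fun i => (outdeg E i : ℝ)) + adjM E

/-- Signless Laplacian spectral radius `q(G)`. -/
noncomputable def qG {n : ℕ} (E : Fin n → Fin n → Prop) [DecidableRel E] : ℝ :=
  specRadR (Qmat E)

/-- Average 2-outdegree `m_i^+`. -/
noncomputable def m2 {n : ℕ} (E : Fin n → Fin n → Prop) [DecidableRel E] (i : Fin n) : ℝ :=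
  (∑ j ∈ Finset.univ.filter (fun j => E i j), (outdeg E j : ℝ)) / (outdeg E i : ℝ)

/-- The finset of arcs of the digraph. -/
def arcs {n : ℕ} (E : Fin n → Fin n → Prop) [DecidableRel E] : Finset (Fin n × Fin n) :=
  Finset.univ.filter (fun p => E p.1 p.2)

/-- Strong connectivity of a digraph. -/
def StrongConn {n : ℕ} (E : Fin n → Fin n → Prop) : Prop :=
  ∀ i j : Fin n, Relation.ReflTransGen E i j

/-- Irreducibility of a square matrix: the digraph of nonzero entries is strongly connected. -/
def MatIrred {n : ℕ} {α : Type*} [Zero α] (M : Matrix (Fin n) (Fin n) α) : Prop :=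
  ∀ i j : Fin n, i ≠ j → Relation.TransGen (fun a b => M a b ≠ 0) i j

/-! If `Q v = μ v` with `μ ≠ 0`, the arc vector `y (i, j) = v i + v j` is a nonzero eigenvector,
for the same `μ`, of the nonnegative arc-indexed matrix sending `y` to
`(i, j) ↦ ∑_{i → k} y (i, k) + ∑_{j → k} y (j, k)`. Evaluating this relation at an arc maximizing
`‖y‖ / f` bounds `‖μ‖` by the weighted row sum of `f` at that arc. -/

theorem Matrix.exists_mulVec_eq_smul_of_mem_spectrum {ι K : Type*} [Fintype ι] [DecidableEq ι]
    [Field K] {M : Matrix ι ι K} {μ : K} (hμ : μ ∈ spectrum K M) :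
    ∃ v ≠ 0, M *ᵥ v = μ • v := by
  rw [← Matrix.spectrum_toLin', ← Module.End.hasEigenvalue_iff_mem_spectrum] at hμ
  obtain ⟨v, hv⟩ := hμ.exists_hasEigenvector
  exact ⟨v, hv.2, by simpa only [Matrix.toLin'_apply] using hv.apply_eq_smul⟩

theorem Finset.exists_norm_eq_mul_forall_norm_le_mul {α E : Type*} [SeminormedAddGroup E]
    {s : Finset α} {f : α → ℝ} (hf : ∀ a ∈ s, 0 < f a) {y : α → E} (hy : ∃ a ∈ s, ‖y a‖ ≠ 0) :
    ∃ a ∈ s, ∃ t : ℝ, 0 < t ∧ ‖y a‖ = t * f a ∧ ∀ b ∈ s, ‖y b‖ ≤ t * f b := by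
  obtain ⟨a₀, ha₀, hya₀⟩ := hy
  have hs : s.Nonempty := ⟨a₀, ha₀⟩
  obtain ⟨a, ha, hmax⟩ := s.exists_mem_eq_sup' hs fun b => ‖y b‖ / f b
  have hle : ∀ b ∈ s, ‖y b‖ / f b ≤ ‖y a‖ / f a := fun b hb =>
    hmax ▸ s.le_sup' (fun b => ‖y b‖ / f b) hb
  refine ⟨a, ha, ‖y a‖ / f a, ?_, by field_simp [(hf a ha).ne'], fun b hb => ?_⟩
  · exact (div_pos ((norm_nonneg _).lt_of_ne' hya₀) (hf a₀ ha₀)).trans_le (hle a₀ ha₀)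
  · exact (div_le_iff₀ (hf b hb)).mp (hle b hb)

section Digraph

variable {n : ℕ} (E : Fin n → Fin n → Prop) [DecidableRel E]

abbrev outNbhd (i : Fin n) : Finset (Fin n) := univ.filter (fun k => E i k)

noncomputable def arcRatio (f : Fin n → Fin n → ℝ) (p : Fin n × Fin n) : ℝ :=
  ((∑ k ∈ outNbhd E p.1, f p.1 k) + (∑ k ∈ outNbhd E p.2, f p.2 k)) / f p.1 p.2

theorem mem_arcs {p : Fin n × Fin n} : p ∈ arcs E ↔ E p.1 p.2 := by
  simp [arcs]

theorem Qmat_map_mulVec_apply (v : Fin n → ℂ) (i : Fin n) :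
    ((Qmat E).map Complex.ofReal *ᵥ v) i = ∑ l ∈ outNbhd E i, (v i + v l) := by
  rw [sum_add_distrib, sum_const, nsmul_eq_mul, ← outdeg]
  simp only [mulVec, dotProduct, map_apply, Qmat, adjM, Matrix.add_apply, diagonal_apply,
    Complex.ofReal_add, add_mul, sum_add_distrib, sum_filter]
  congr 1 <;> simp [apply_ite Complex.ofReal, ite_mul]

variable {E}

theorem mul_add_eq_of_Qmat_mulVec_eq_smul {μ : ℂ} {v : Fin n → ℂ}
    (hv : (Qmat E).map Complex.ofReal *ᵥ v = μ • v) (i j : Fin n) :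
    μ * (v i + v j) = ∑ l ∈ outNbhd E i, (v i + v l) + ∑ l ∈ outNbhd E j, (v j + v l) := by
  simp only [mul_add, ← Qmat_map_mulVec_apply, hv, Pi.smul_apply, smul_eq_mul]

theorem exists_mem_arcs_norm_add_ne_zero {μ : ℂ} (hμ : μ ≠ 0) {v : Fin n → ℂ} (hv0 : v ≠ 0)
    (hv : (Qmat E).map Complex.ofReal *ᵥ v = μ • v) : ∃ p ∈ arcs E, ‖v p.1 + v p.2‖ ≠ 0 := by
  by_contra! h
  refine hv0 (funext fun i => ?_)
  have : μ * v i = 0 := by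
    rw [← smul_eq_mul, ← Pi.smul_apply, ← hv, Qmat_map_mulVec_apply]
    exact sum_eq_zero fun l hl =>
      norm_eq_zero.mp (h (i, l) ((mem_arcs E).mpr (mem_filter.mp hl).2))
  simpa [hμ] using this

variable {f : Fin n → Fin n → ℝ}

theorem arcRatio_nonneg (hf : ∀ i j, 0 ≤ f i j) (p : Fin n × Fin n) : 0 ≤ arcRatio E f p :=
  div_nonneg (add_nonneg (sum_nonneg fun _ _ => hf _ _) (sum_nonneg fun _ _ => hf _ _)) (hf _ _)

theorem exists_norm_le_arcRatio (hfpos : ∀ i j, E i j → 0 < f i j) {μ : ℂ} (hμ : μ ≠ 0)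
    {v : Fin n → ℂ} (hv0 : v ≠ 0) (hv : (Qmat E).map Complex.ofReal *ᵥ v = μ • v) :
    ∃ p ∈ arcs E, ‖μ‖ ≤ arcRatio E f p := by
  obtain ⟨p, hp, t, ht, hyp, hyle⟩ := exists_norm_eq_mul_forall_norm_le_mul
    (fun q hq => hfpos q.1 q.2 ((mem_arcs E).mp hq)) (exists_mem_arcs_norm_add_ne_zero hμ hv0 hv)
  have hbound (i : Fin n) : ‖∑ l ∈ outNbhd E i, (v i + v l)‖ ≤ t * ∑ l ∈ outNbhd E i, f i l := by
    rw [mul_sum]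
    refine (norm_sum_le _ _).trans (sum_le_sum fun l hl => ?_)
    exact hyle (i, l) ((mem_arcs E).mpr (mem_filter.mp hl).2)
  have hfp : 0 < f p.1 p.2 := hfpos _ _ ((mem_arcs E).mp hp)
  refine ⟨p, hp, (le_div_iff₀ hfp).mpr (le_of_mul_le_mul_left ?_ ht)⟩
  calc t * (‖μ‖ * f p.1 p.2) = ‖μ * (v p.1 + v p.2)‖ := by rw [norm_mul, hyp]; ring
    _ ≤ t * (∑ k ∈ outNbhd E p.1, f p.1 k) + t * (∑ k ∈ outNbhd E p.2, f p.2 k) := by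
      rw [mul_add_eq_of_Qmat_mulVec_eq_smul hv]
      exact (norm_add_le _ _).trans (add_le_add (hbound _) (hbound _))
    _ = t * ((∑ k ∈ outNbhd E p.1, f p.1 k) + (∑ k ∈ outNbhd E p.2, f p.2 k)) := by ring

end Digraph

theorem stmt_8_general {n : ℕ} (E : Fin n → Fin n → Prop) [DecidableRel E]
    (harcs : (arcs E).Nonempty)
    (f : Fin n → Fin n → ℝ) (hf : ∀ i j, 0 ≤ f i j)
    (hfpos : ∀ i j, E i j → 0 < f i j) :
    qG E ≤ (arcs E).sup' harcs (fun p =>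
      ((∑ k ∈ Finset.univ.filter (fun k => E p.1 k), f p.1 k) +
       (∑ k ∈ Finset.univ.filter (fun k => E p.2 k), f p.2 k)) / f p.1 p.2) := by
  change qG E ≤ (arcs E).sup' harcs (arcRatio E f)
  obtain ⟨p₀, hp₀⟩ := harcs
  have hsup_nonneg := (arcRatio_nonneg hf p₀).trans ((arcs E).le_sup' (arcRatio E f) hp₀)
  refine Real.sSup_le ?_ hsup_nonneg
  rintro _ ⟨μ, hμ, rfl⟩
  rcases eq_or_ne μ 0 with rfl | hμ0
  · simpa using hsup_nonneg
  obtain ⟨v, hv0, hv⟩ := exists_mulVec_eq_smul_of_mem_spectrum hμ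
  obtain ⟨p, hp, hμp⟩ := exists_norm_le_arcRatio hfpos hμ0 hv0 hv
  exact hμp.trans ((arcs E).le_sup' (arcRatio E f) hp)

/-- weighted upper bound for `q(G)` via a function positive on arcs. -/
theorem stmt_8 {n : ℕ} (E : Fin n → Fin n → Prop) [DecidableRel E]
    (hloop : ∀ i, ¬ E i i) (harcs : (arcs E).Nonempty)
    (f : Fin n → Fin n → ℝ) (hf : ∀ i j, 0 ≤ f i j)
    (hfpos : ∀ i j, E i j → 0 < f i j) :
    qG E ≤ (arcs E).sup' harcs (fun p =>
      ((∑ k ∈ Finset.univ.filter (fun k => E p.1 k), f p.1 k) +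
       (∑ k ∈ Finset.univ.filter (fun k => E p.2 k), f p.2 k)) / f p.1 p.2) :=
  stmt_8_general E harcs f hf hfpos
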